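/- Suppose x(t) and y(t) are two solutions of ẋ = f(x,t) with f smooth, and along the line segment between them the Jacobian ∂f/∂x(·,t) satisfies vᵀ(∂f/∂x)v ≤ -λ‖v‖² uniformly for some λ > 0. Then (d/dt)‖x(t)-y(t)‖² ≤ -2λ‖x(t)-y(t)‖², and hence ‖x(t)-y(t)‖ ≤ e^{-λt}‖x(0)-y(0)‖ for t ≥ 0. -/

import Mathlib

/-!
Along the segment from `y` to `x`, the mean value theorem applied to `s ↦ ⟪x - y, f (y + s • (x - y))⟫`
turns the Jacobian bound into the one-sided Lipschitz estimate
`⟪x - y, f x - f y⟫ ≤ -λ ‖x - y‖²`. Since `d/dt ‖x - y‖² = 2 ⟪x - y, ẋ - ẏ⟫`, this is the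
differential inequality for `‖x - y‖²`, and Grönwall's inequality gives
`‖x t - y t‖² ≤ e^{-2λt} ‖x 0 - y 0‖²`.
-/

open Real Set

section OneSidedLipschitz

variable {E : Type*} [NormedAddCommGroup E] [InnerProductSpace ℝ E]

theorem inner_sub_apply_sub_le_of_inner_fderiv_le {g : E → E} {x y : E} {lam : ℝ}
    (hg : ∀ s ∈ Icc (0 : ℝ) 1, DifferentiableAt ℝ g (y + s • (x - y)))
    (hJ : ∀ s ∈ Icc (0 : ℝ) 1,
      inner ℝ (x - y) (fderiv ℝ g (y + s • (x - y)) (x - y)) ≤ -lam * ‖x - y‖ ^ 2) :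
    inner ℝ (x - y) (g x - g y) ≤ -lam * ‖x - y‖ ^ 2 := by
  set v := x - y with hv
  have hderiv : ∀ s ∈ Icc (0 : ℝ) 1, HasDerivAt (fun s : ℝ => inner ℝ v (g (y + s • v)))
      (inner ℝ v (fderiv ℝ g (y + s • v) v)) s := by
    intro s hs
    have hline : HasDerivAt (fun s : ℝ => y + s • v) v s := by
      simpa using ((hasDerivAt_id s).smul_const v).const_add y
    simpa using (hasDerivAt_const s v).inner ℝ ((hg s hs).hasFDerivAt.comp_hasDerivAt s hline)
  obtain ⟨c, hc, hslope⟩ := exists_hasDerivAt_eq_slope _ _ zero_lt_one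
    (fun s hs => (hderiv s hs).continuousAt.continuousWithinAt)
    (fun s hs => hderiv s (Ioo_subset_Icc_self hs))
  have hends : y + (1 : ℝ) • v = x ∧ y + (0 : ℝ) • v = y := by
    constructor <;> simp [hv]
  rw [hends.1, hends.2, sub_zero, div_one, ← inner_sub_right] at hslope
  exact hslope ▸ hJ c (Ioo_subset_Icc_self hc)

end OneSidedLipschitz

theorem le_mul_exp_of_hasDerivAt_le_mul {u u' : ℝ → ℝ} {K a t : ℝ}
    (hu : ∀ s, HasDerivAt u (u' s) s) (hbound : ∀ s, u' s ≤ K * u s) (ht : a ≤ t) :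
    u t ≤ u a * exp (K * (t - a)) := by
  rw [← gronwallBound_ε0]
  refine le_gronwallBound_of_liminf_deriv_right_le (b := t)
    (fun s _ => (hu s).continuousAt.continuousWithinAt)
    (fun s _ _ hr => (hu s).hasDerivWithinAt.liminf_right_slope_le hr) le_rfl
    (fun s _ => by simpa using hbound s) t ⟨ht, le_rfl⟩

theorem stmt5_general (n : ℕ) (f : EuclideanSpace ℝ (Fin n) → ℝ → EuclideanSpace ℝ (Fin n))
    (hf : ContDiff ℝ 1 (fun p : EuclideanSpace ℝ (Fin n) × ℝ => f p.1 p.2))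
    (lam : ℝ)
    (x y : ℝ → EuclideanSpace ℝ (Fin n))
    (hx : ∀ t, HasDerivAt x (f (x t) t) t) (hy : ∀ t, HasDerivAt y (f (y t) t) t)
    (hJ : ∀ (t s : ℝ), s ∈ Set.Icc (0 : ℝ) 1 → ∀ v : EuclideanSpace ℝ (Fin n),
      (inner ℝ v (fderiv ℝ (fun z => f z t) (y t + s • (x t - y t)) v) : ℝ) ≤ -lam * ‖v‖ ^ 2) :
    (∀ t, deriv (fun t => ‖x t - y t‖ ^ 2) t ≤ -2 * lam * ‖x t - y t‖ ^ 2) ∧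
    (∀ t : ℝ, 0 ≤ t → ‖x t - y t‖ ≤ Real.exp (-lam * t) * ‖x 0 - y 0‖) := by
  have hf_slice : ∀ t, Differentiable ℝ (fun z => f z t) := fun t =>
    (hf.differentiable one_ne_zero).comp (differentiable_id.prodMk (differentiable_const t))
  have hmono : ∀ t, inner ℝ (x t - y t) (f (x t) t - f (y t) t) ≤ -lam * ‖x t - y t‖ ^ 2 :=
    fun t => inner_sub_apply_sub_le_of_inner_fderiv_le (fun _ _ => (hf_slice t).differentiableAt)
      (fun s hs => hJ t s hs _)
  have hderiv : ∀ t, HasDerivAt (fun t => ‖x t - y t‖ ^ 2)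
      (2 * inner ℝ (x t - y t) (f (x t) t - f (y t) t)) t :=
    fun t => ((hx t).sub (hy t)).norm_sq
  have hbound : ∀ t, 2 * inner ℝ (x t - y t) (f (x t) t - f (y t) t)
      ≤ -2 * lam * ‖x t - y t‖ ^ 2 := fun t => by linarith [hmono t]
  refine ⟨fun t => (hderiv t).deriv ▸ hbound t, fun t ht => ?_⟩
  have hsq := le_mul_exp_of_hasDerivAt_le_mul hderiv hbound ht
  have hexp : ‖x 0 - y 0‖ ^ 2 * exp (-2 * lam * (t - 0)) = (exp (-lam * t) * ‖x 0 - y 0‖) ^ 2 := by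
    rw [mul_pow, ← exp_nat_mul]
    ring_nf
  exact (pow_le_pow_iff_left₀ (norm_nonneg _) (by positivity) two_ne_zero).mp (hexp ▸ hsq)

/-- contraction between two trajectories under a uniform Jacobian bound
along the connecting segment. -/
theorem stmt5 (n : ℕ) (f : EuclideanSpace ℝ (Fin n) → ℝ → EuclideanSpace ℝ (Fin n))
    (hf : ContDiff ℝ 1 (fun p : EuclideanSpace ℝ (Fin n) × ℝ => f p.1 p.2))
    (lam : ℝ) (hlam : 0 < lam)
    (x y : ℝ → EuclideanSpace ℝ (Fin n))
    (hx : ∀ t, HasDerivAt x (f (x t) t) t) (hy : ∀ t, HasDerivAt y (f (y t) t) t)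
    (hJ : ∀ (t s : ℝ), s ∈ Set.Icc (0 : ℝ) 1 → ∀ v : EuclideanSpace ℝ (Fin n),
      (inner ℝ v (fderiv ℝ (fun z => f z t) (y t + s • (x t - y t)) v) : ℝ) ≤ -lam * ‖v‖ ^ 2) :
    (∀ t, deriv (fun t => ‖x t - y t‖ ^ 2) t ≤ -2 * lam * ‖x t - y t‖ ^ 2) ∧
    (∀ t : ℝ, 0 ≤ t → ‖x t - y t‖ ≤ Real.exp (-lam * t) * ‖x 0 - y 0‖) :=
  stmt5_general n f hf lam x y hx hy hJ
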